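/- For every positive integer k, (1/k^k) ∑_{l=0}^{k} C(k,l) l^l (k−l)^{k−l} = (k!/k^k) ∑_{l=0}^{k} k^l/l!, where 0^0 := 1. -/
import Mathlib

open scoped BigOperators
open Finset

namespace Schenker

noncomputable def V (n : ℕ) (x y : ℝ) : ℝ :=
  ∑ k ∈ range (n+1), (n.choose k : ℝ) * (x + k)^k * (y + ((n-k : ℕ) : ℝ))^(n-k)

noncomputable def M (n : ℕ) (x y : ℝ) : ℝ :=
  ∑ k ∈ range (n+1), (n.choose k : ℝ) * (x + k)^(k+1) * (y + ((n-k : ℕ) : ℝ))^(n-k)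

noncomputable def T (n : ℕ) (s : ℝ) : ℝ :=
  ∑ m ∈ range (n+1), (n.descFactorial m : ℝ) * s^(n-m)

noncomputable def G (n : ℕ) (a s : ℝ) : ℝ :=
  ∑ m ∈ range (n+1), (n.descFactorial m : ℝ) * ((m:ℝ)+1) * (2*a + m) * s^(n-m)

lemma M_rec (n : ℕ) (x y : ℝ) :
    M (n+1) x y = x * V (n+1) x y + ((n:ℝ)+1) * M n (x+1) y := by
  have h1 : M (n+1) x y = x * V (n+1) x y +
      ∑ k ∈ range (n+2), (k:ℝ) * ((n+1).choose k : ℝ) * (x+k)^k *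
        (y + (((n+1)-k : ℕ) : ℝ))^((n+1)-k) := by
    rw [V, M, mul_sum, ← sum_add_distrib]
    refine sum_congr rfl fun k hk => ?_
    rw [pow_succ]
    ring
  rw [h1]
  congr 1
  rw [Finset.sum_range_succ']
  simp only [Nat.cast_zero, zero_mul, add_zero, Nat.succ_sub_succ_eq_sub]
  rw [M, mul_sum]
  refine sum_congr rfl fun k hk => ?_
  have hc : ((k:ℕ)+1) * ((n+1).choose (k+1)) = (n+1) * (n.choose k) := by
    rw [mul_comm ((k:ℕ)+1), ← Nat.add_one_mul_choose_eq]
  have hc' : ((k:ℝ)+1) * (((n+1).choose (k+1) : ℕ) : ℝ) = ((n:ℝ)+1) * (n.choose k : ℝ) := by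
    exact_mod_cast congrArg (fun m : ℕ => (m : ℝ)) hc
  push_cast
  have hx : x + ((k:ℝ)+1) = (x+1) + k := by ring
  rw [hx]
  linear_combination hc' * ((x+1+(k:ℝ))^(k+1) * (y + ((n-k:ℕ):ℝ))^(n-k))

lemma M_reflect (n : ℕ) (x y : ℝ) :
    M n (y+1) x = ∑ k ∈ range (n+1),
      (n.choose k : ℝ) * (x + k)^k * ((y+1) + ((n-k:ℕ):ℝ))^((n-k)+1) := by
  rw [M, ← Finset.sum_range_reflect]
  refine sum_congr rfl fun k hk => ?_
  have hk' : k ≤ n := by simpa [Nat.lt_succ] using hk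
  have h1 : n + 1 - 1 - k = n - k := by omega
  have h2 : n - (n - k) = k := by omega
  rw [h1, h2, Nat.choose_symm hk']
  ring

lemma V_rec (n : ℕ) (x y : ℝ) : V (n+1) x y = M n (y+1) x + M n (x+1) y := by
  have e1 : V (n+1) x y =
      (∑ k ∈ range (n+1), ((n.choose k : ℝ) + (n.choose (k+1) : ℝ)) *
        (x + ((k:ℝ)+1))^(k+1) * (y + ((n-k:ℕ):ℝ))^(n-k))
      + (y + ((n+1:ℕ):ℝ))^(n+1) := by
    rw [V, Finset.sum_range_succ']
    congr 1
    · refine sum_congr rfl fun k hk => ?_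
      have h2 : (n+1) - (k+1) = n - k := by omega
      have h3 : ((n+1).choose (k+1) : ℝ) = (n.choose k : ℝ) + (n.choose (k+1) : ℝ) := by
        exact_mod_cast congrArg (fun m : ℕ => (m:ℝ)) (Nat.choose_succ_succ' (n+1-1) k)
      rw [h2, h3]
      push_cast
      ring
    · simp
  have e2 : (∑ k ∈ range (n+1), (n.choose k : ℝ) *
        (x + ((k:ℝ)+1))^(k+1) * (y + ((n-k:ℕ):ℝ))^(n-k)) = M n (x+1) y := by
    rw [M]
    refine sum_congr rfl fun k hk => ?_
    ring
  have e3 : (∑ k ∈ range (n+1), (n.choose (k+1) : ℝ) *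
        (x + ((k:ℝ)+1))^(k+1) * (y + ((n-k:ℕ):ℝ))^(n-k))
      + (y + ((n+1:ℕ):ℝ))^(n+1) = M n (y+1) x := by
    have hH : (∑ k ∈ range (n+2), (n.choose k : ℝ) * (x + (k:ℝ))^k *
          (y + (((n+1)-k:ℕ):ℝ))^((n+1)-k)) =
        (∑ k ∈ range (n+1), (n.choose (k+1) : ℝ) *
          (x + ((k:ℝ)+1))^(k+1) * (y + ((n-k:ℕ):ℝ))^(n-k))
        + (y + ((n+1:ℕ):ℝ))^(n+1) := by
      rw [Finset.sum_range_succ']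
      congr 1
      · refine sum_congr rfl fun k hk => ?_
        have h2 : (n+1) - (k+1) = n - k := by omega
        rw [h2]
        push_cast
        ring
      · simp
    rw [← hH, Finset.sum_range_succ]
    simp only [Nat.choose_succ_self, Nat.cast_zero, zero_mul, add_zero]
    rw [M_reflect]
    refine sum_congr rfl fun k hk => ?_
    have hk' : k ≤ n := by simpa [Nat.lt_succ] using hk
    have h2 : (n+1) - k = (n-k) + 1 := by omega
    rw [h2]
    have h4 : (((n-k)+1 : ℕ):ℝ) = ((n-k:ℕ):ℝ) + 1 := by push_cast; ring
    rw [h4]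
    ring
  rw [e1, ← e2, ← e3]
  simp only [add_mul]
  rw [sum_add_distrib]
  ring

lemma descFact_pascal (n k : ℕ) :
    (n+1).descFactorial (k+1) = n.descFactorial (k+1) + (k+1) * n.descFactorial k := by
  rcases le_or_gt k n with h | h
  · rw [Nat.succ_descFactorial_succ, Nat.descFactorial_succ]
    have h2 : n - k + (k+1) = n + 1 := by omega
    nlinarith [h2]
  · rw [Nat.succ_descFactorial_succ,
      Nat.descFactorial_of_lt (show n < k+1 by omega),
      Nat.descFactorial_of_lt h]
    simp

lemma hT_peel (n : ℕ) (s : ℝ) : T (n+1) s =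
    (∑ m ∈ range (n+1), ((n+1).descFactorial (m+1) : ℝ) * s^(n-m)) + s^(n+1) := by
  rw [T, Finset.sum_range_succ']
  congr 1
  · exact sum_congr rfl fun m hm => by rw [show (n+1)-(m+1) = n-m from by omega]
  · simp

lemma A2 (n : ℕ) (x s : ℝ) :
    G (n+1) x s = 2*x*T (n+1) s + ((n:ℝ)+1) * G n (x+1) s := by
  have hG : G (n+1) x s = (∑ m ∈ range (n+1),
      ((n+1).descFactorial (m+1) : ℝ) * ((m:ℝ)+2) * (2*x+(m:ℝ)+1) * s^(n-m))
      + 2*x*s^(n+1) := by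
    rw [G, Finset.sum_range_succ']
    congr 1
    · refine sum_congr rfl fun m hm => ?_
      rw [show (n+1)-(m+1) = n-m from by omega]
      push_cast
      ring
    · simp
  rw [hG, hT_peel, G, mul_add, mul_sum, mul_sum]
  have key : (∑ m ∈ range (n+1),
      ((n+1).descFactorial (m+1) : ℝ) * ((m:ℝ)+2) * (2*x+(m:ℝ)+1) * s^(n-m))
      = ∑ m ∈ range (n+1),
        (2*x*(((n+1).descFactorial (m+1) : ℝ) * s^(n-m))
          + ((n:ℝ)+1) * ((n.descFactorial m : ℝ) * ((m:ℝ)+1) * (2*(x+1)+(m:ℝ)) * s^(n-m))) := by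
    refine sum_congr rfl fun m hm => ?_
    have hdf : (((n+1).descFactorial (m+1) : ℕ) : ℝ)
        = ((n:ℝ)+1) * (n.descFactorial m : ℝ) := by
      exact_mod_cast congrArg (fun t : ℕ => (t:ℝ)) (Nat.succ_descFactorial_succ n m)
    rw [hdf]
    ring
  rw [key, sum_add_distrib]
  ring

lemma A1 (n : ℕ) (a b s : ℝ) (h : a + b = s + 1 - n) :
    G n a s + G n b s = 2 * T (n+1) s := by
  have C0 : G n a s + G n b s =
      2 * ((∑ m ∈ range (n+1), (n.descFactorial m : ℝ) * ((m:ℝ)+1) * s^((n-m)+1))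
        + (∑ m ∈ range (n+1), (n.descFactorial m : ℝ) * ((m:ℝ)+1) * s^(n-m))
        - (∑ m ∈ range (n+1), (n.descFactorial (m+1) : ℝ) * ((m:ℝ)+1) * s^(n-m))) := by
    rw [G, G, ← sum_add_distrib, ← sum_add_distrib, ← sum_sub_distrib, mul_sum]
    refine sum_congr rfl fun m hm => ?_
    have hm' : m ≤ n := by simpa [Nat.lt_succ] using hm
    have hnm : ((n - m : ℕ) : ℝ) = (n:ℝ) - (m:ℝ) := by
      have h5 : ((n:ℕ) - m) + m = n := by omega
      have := congrArg (fun t : ℕ => (t:ℝ)) h5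
      push_cast at this
      linarith
    have hdf : (n.descFactorial (m+1) : ℝ)
        = (n.descFactorial m : ℝ) * ((n:ℝ) - (m:ℝ)) := by
      rw [← hnm]
      exact_mod_cast congrArg (fun t : ℕ => (t:ℝ))
        (by rw [Nat.descFactorial_succ, Nat.mul_comm])
    have hpow : s^((n-m)+1) = s^(n-m) * s := pow_succ s (n-m)
    have hab : b = s + 1 - n - a := by linarith
    rw [hdf, hpow, hab]
    ring
  have C1 : (∑ m ∈ range (n+1), (n.descFactorial m : ℝ) * ((m:ℝ)+1) * s^((n-m)+1))
      = s^(n+1) + ∑ m ∈ range (n+1), (n.descFactorial (m+1) : ℝ) * ((m:ℝ)+2) * s^(n-m) := by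
    rw [Finset.sum_range_succ', add_comm]
    congr 1
    · simp
    · rw [Finset.sum_range_succ (fun m => (n.descFactorial (m+1) : ℝ) * ((m:ℝ)+2) * s^(n-m)) n]
      rw [Nat.descFactorial_of_lt (by omega : n < n+1)]
      simp only [Nat.cast_zero, zero_mul, add_zero]
      refine (sum_congr rfl fun m hm => ?_).symm
      have hm' : m < n := by simpa using hm
      rw [show (n-(m+1))+1 = n-m from by omega]
      push_cast
      ring
  have C2 : (∑ m ∈ range (n+1), (n.descFactorial (m+1) : ℝ) * ((m:ℝ)+2) * s^(n-m))
        + (∑ m ∈ range (n+1), (n.descFactorial m : ℝ) * ((m:ℝ)+1) * s^(n-m))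
        - (∑ m ∈ range (n+1), (n.descFactorial (m+1) : ℝ) * ((m:ℝ)+1) * s^(n-m))
      = ∑ m ∈ range (n+1), ((n+1).descFactorial (m+1) : ℝ) * s^(n-m) := by
    rw [← sum_add_distrib, ← sum_sub_distrib]
    refine sum_congr rfl fun m hm => ?_
    have hdp : (((n+1).descFactorial (m+1) : ℕ) : ℝ)
        = (n.descFactorial (m+1) : ℝ) + ((m:ℝ)+1) * (n.descFactorial m : ℝ) := by
      exact_mod_cast congrArg (fun t : ℕ => (t:ℝ)) (descFact_pascal n m)
    rw [hdp]
    ring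
  rw [C0, C1, hT_peel]
  linarith [C2]

lemma main_ind (n : ℕ) (x y : ℝ) :
    V n x y = T n (x+y+n) ∧ 2 * M n x y = G n x (x+y+n) := by
  induction n generalizing x y with
  | zero =>
    constructor
    · simp [V, T]
    · simp [M, G]
  | succ n ih =>
    have hcast : x + y + ((n+1:ℕ):ℝ) = x + y + (n:ℝ) + 1 := by push_cast; ring
    have h1 := (ih (y+1) x).2
    have h2 := (ih (x+1) y).2
    rw [show (y+1) + x + (n:ℝ) = x + y + (n:ℝ) + 1 from by ring] at h1
    rw [show (x+1) + y + (n:ℝ) = x + y + (n:ℝ) + 1 from by ring] at h2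
    have hA := A1 n (y+1) (x+1) (x+y+(n:ℝ)+1) (by ring)
    have hV : V (n+1) x y = T (n+1) (x+y+(n:ℝ)+1) := by
      rw [V_rec]
      linarith
    constructor
    · rw [hcast]; exact hV
    · rw [hcast, M_rec, A2 n x (x+y+(n:ℝ)+1)]
      linear_combination 2*x*hV + ((n:ℝ)+1)*h2

lemma T_eval (k : ℕ) : T k (k:ℝ) =
    (k.factorial : ℝ) * ∑ l ∈ range (k+1), (k:ℝ)^l / (l.factorial : ℝ) := by
  rw [T, mul_sum, ← Finset.sum_range_reflect]
  refine sum_congr rfl fun l hl => ?_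
  have hl' : l ≤ k := by simpa [Nat.lt_succ] using hl
  rw [show k + 1 - 1 - l = k - l from by omega, show k - (k - l) = l from by omega]
  have hfd : (l.factorial : ℕ) * k.descFactorial (k-l) = k.factorial := by
    have := Nat.factorial_mul_descFactorial (show k - l ≤ k from by omega)
    rwa [show k - (k-l) = l from by omega] at this
  have hfd' : (l.factorial : ℝ) * (k.descFactorial (k-l) : ℝ) = (k.factorial : ℝ) := by
    exact_mod_cast congrArg (fun t : ℕ => (t:ℝ)) hfd
  have hl0 : (l.factorial : ℝ) ≠ 0 := by
    exact_mod_cast l.factorial_ne_zero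
  field_simp
  linear_combination (k:ℝ)^l * hfd'

end Schenker

/-- Prodinger's identity for the Schenker sums: for every `k ≥ 1`,
`(1/k^k) ∑_{l=0}^k C(k,l) l^l (k−l)^{k−l} = (k!/k^k) ∑_{l=0}^k k^l/l!` (with `0^0 = 1`). -/
theorem schenker_identity (k : ℕ) (hk : 1 ≤ k) :
    (1 / (k : ℝ) ^ k) *
        ∑ l ∈ Finset.range (k + 1),
          (Nat.choose k l : ℝ) * (l : ℝ) ^ l * ((k - l : ℕ) : ℝ) ^ (k - l) =
      ((Nat.factorial k : ℝ) / (k : ℝ) ^ k) *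
        ∑ l ∈ Finset.range (k + 1), (k : ℝ) ^ l / (Nat.factorial l : ℝ) := by
  have hL : (∑ l ∈ Finset.range (k + 1),
      (Nat.choose k l : ℝ) * (l : ℝ) ^ l * ((k - l : ℕ) : ℝ) ^ (k - l))
      = Schenker.V k 0 0 := by
    rw [Schenker.V]
    refine Finset.sum_congr rfl fun l hl => by rw [zero_add, zero_add]
  have h0 := (Schenker.main_ind k 0 0).1
  rw [show (0:ℝ) + 0 + (k:ℝ) = (k:ℝ) from by ring] at h0
  rw [hL, h0, Schenker.T_eval]
  ring
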